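/- The exponential parametrization is bijective with a polynomial inverse: the map t ↦ ψ = exp(T(t))·e_{[d]} from cluster amplitudes to Fock space coordinates is a bijection from ℂ^{2^n−1} onto the affine chart {ψ_{[d]} = 1}, and each inverse coordinate t_{I,B} is a polynomial in the ψ-coordinates of strictly lower or equal level. -/

import Mathlib

open Finset

/-- The reference set `[d] ⊆ [n]`. -/
def refSet (n d : ℕ) : Finset (Fin n) := Finset.univ.filter (fun i => (i : ℕ) < d)

/-- Matrix of the creation operator `a_p^†` on the Fock space, in the basis of
occupation number states indexed by subsets of `[n]`. -/
def creMat (n : ℕ) (p : Fin n) : Matrix (Finset (Fin n)) (Finset (Fin n)) ℂ :=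
  fun K J => if p ∉ J ∧ K = insert p J then (-1 : ℂ) ^ (J.filter (· < p)).card else 0

/-- Matrix of the annihilation operator `a_p` on the Fock space. -/
def annMat (n : ℕ) (p : Fin n) : Matrix (Finset (Fin n)) (Finset (Fin n)) ℂ :=
  fun K J => if p ∈ J ∧ K = J.erase p then (-1 : ℂ) ^ (J.filter (· < p)).card else 0

/-- The normal ordered monomial `a_B^† a_I = a_{b_ℓ}^† ⋯ a_{b_1}^† a_{i_1} ⋯ a_{i_m}`
(creations in decreasing order, annihilations in increasing order). -/
noncomputable def exMon (n : ℕ) (I B : Finset (Fin n)) :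
    Matrix (Finset (Fin n)) (Finset (Fin n)) ℂ :=
  ((B.sort (· ≤ ·)).reverse.map (creMat n)).prod *
    ((I.sort (· ≤ ·)).map (annMat n)).prod

/-- The cluster matrix `T(t) = ∑_{I ⊆ [d], B ⊆ [n]\[d], |I|+|B|>0} t_{I,B} a_B^† a_I`. -/
noncomputable def clusterMat (n d : ℕ) (t : Finset (Fin n) × Finset (Fin n) → ℂ) :
    Matrix (Finset (Fin n)) (Finset (Fin n)) ℂ :=
  ∑ p ∈ Finset.univ.filter
      (fun p : Finset (Fin n) × Finset (Fin n) =>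
        p.1 ⊆ refSet n d ∧ p.2 ⊆ (refSet n d)ᶜ ∧ p ≠ (∅, ∅)),
    t p • exMon n p.1 p.2

/-- The (truncated, hence exact for nilpotent arguments) matrix exponential
`∑_{k=0}^{n} A^k/k!`. -/
noncomputable def expMat (n : ℕ) (A : Matrix (Finset (Fin n)) (Finset (Fin n)) ℂ) :
    Matrix (Finset (Fin n)) (Finset (Fin n)) ℂ :=
  ∑ k ∈ Finset.range (n + 1), ((k.factorial : ℂ))⁻¹ • A ^ k

/-- The exponential parametrization `t ↦ ψ = exp(T(t))·e_{[d]}` in Plücker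
coordinates: `ψ_J` is the `(J, [d])` entry of `exp(T(t))`. -/
noncomputable def ccPsi (n d : ℕ) (t : Finset (Fin n) × Finset (Fin n) → ℂ) :
    Finset (Fin n) → ℂ :=
  fun J => expMat n (clusterMat n d t) J (refSet n d)

/-- Cluster amplitudes: functions supported on the valid index pairs `(I,B)` with
`I ⊆ [d]`, `B ⊆ [n]\[d]`, `|I|+|B| > 0`. -/
def Amplitudes (n d : ℕ) :=
  {t : Finset (Fin n) × Finset (Fin n) → ℂ //
    ∀ p, ¬(p.1 ⊆ refSet n d ∧ p.2 ⊆ (refSet n d)ᶜ ∧ p ≠ (∅, ∅)) → t p = 0}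

/-!
Replace the amplitudes by indeterminates `X q`, one for each admissible `q = (I, B)`. The
monomial `a_B^† a_I` sends `e_S` to a multiple of `e_{(S \ I) ∪ B}`, and when this is nonzero it
raises the level by `rank q = |I| + |B|`. Giving `X q` the weight `rank q - 1`, the entries
`(T^k)_{J,S}` are therefore weighted homogeneous of degree `level J - level S - k`. In the
`[d]`-column of `exp T` this gives `ψ_{[d]} = 1`, and, for `J = ([d] \ I) ∪ B`,
`ψ_J = ε t_{I,B} + (a polynomial in amplitudes of rank < |I| + |B|)` with `ε ≠ 0` coming from
`k = 1`. A polynomial system that is triangular in this sense is inverted by recursion on the rank.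
-/

namespace MvPolynomial

section TriangularInverse

variable {σ K : Type*} [Field K]

def IsTriangular (w : σ → ℕ) (c : σ → K) (F : σ → MvPolynomial σ K) : Prop :=
  (∀ i, c i ≠ 0) ∧ ∀ i, ∀ j ∈ (F i - C (c i) * X i).vars, w j < w i

/-- The guard `w j < w i` only makes the recursion well founded: for a triangular system, the
variables of `F i - C (c i) * X i` all pass it. -/
noncomputable def triangularInverse (w : σ → ℕ) (c : σ → K) (F : σ → MvPolynomial σ K)
    (i : σ) : MvPolynomial σ K :=
  C (c i)⁻¹ * (X i - bind₁ (fun j => if w j < w i then triangularInverse w c F j else 0)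
    (F i - C (c i) * X i))
termination_by w i

variable {w : σ → ℕ} {c : σ → K} {F : σ → MvPolynomial σ K}

lemma IsTriangular.eval_triangularInverse (hF : IsTriangular w c F) (ψ : σ → K) (i : σ) :
    eval ψ (triangularInverse w c F i) = (c i)⁻¹ *
      (ψ i - eval (fun j => eval ψ (triangularInverse w c F j)) (F i - C (c i) * X i)) := by
  rw [triangularInverse, map_mul, eval_C, map_sub, eval_X, ← aeval_eq_eval, aeval_bind₁]
  congr 2
  refine eval₂Hom_congr' rfl (fun j hj _ => ?_) rfl
  rw [if_pos (hF.2 i j hj)]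

lemma IsTriangular.vars_triangularInverse (hF : IsTriangular w c F) (i : σ) :
    ∀ j ∈ (triangularInverse w c F i).vars, w j ≤ w i := by
  classical
  induction h : w i using Nat.strong_induction_on generalizing i with
  | _ m ih =>
  subst h
  intro j hj
  rw [triangularInverse] at hj
  replace hj := vars_mul _ _ hj
  rw [vars_C, empty_union] at hj
  rcases mem_union.mp (vars_sub_subset _ hj) with hj | hj
  · rw [vars_X, mem_singleton] at hj
    rw [hj]
  · obtain ⟨k, hk, hjk⟩ := mem_biUnion.mp (vars_bind₁ _ _ hj)
    have hki := hF.2 i k hk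
    rw [if_pos hki] at hjk
    exact (ih _ hki k rfl j hjk).trans hki.le

theorem IsTriangular.eval_triangularInverse_eval (hF : IsTriangular w c F) (t : σ → K) (i : σ) :
    eval (fun j => eval t (F j)) (triangularInverse w c F i) = t i := by
  induction h : w i using Nat.strong_induction_on generalizing i with
  | _ m ih =>
  subst h
  have hlower : eval (fun j => eval (fun j => eval t (F j)) (triangularInverse w c F j))
      (F i - C (c i) * X i) = eval t (F i - C (c i) * X i) :=
    eval₂Hom_congr' rfl (fun j hj _ => ih _ (hF.2 i j hj) j rfl) rfl
  rw [hF.eval_triangularInverse, hlower, map_sub (eval t) (F i), map_mul, eval_C, eval_X,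
    sub_sub_cancel, inv_mul_cancel_left₀ (hF.1 i)]

theorem IsTriangular.eval_eval_triangularInverse (hF : IsTriangular w c F) (ψ : σ → K)
    (i : σ) :
    eval (fun j => eval ψ (triangularInverse w c F j)) (F i) = ψ i := by
  rw [← add_sub_cancel (C (c i) * X i) (F i), map_add, map_mul, eval_C, eval_X,
    hF.eval_triangularInverse, mul_inv_cancel_left₀ (hF.1 i), sub_add_cancel]

end TriangularInverse

namespace IsWeightedHomogeneous

variable {σ R M : Type*} [CommSemiring R] [AddCommMonoid M] [PartialOrder M]
  [IsOrderedAddMonoid M] {w : σ → M} {φ : MvPolynomial σ R} {m : M}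

theorem weight_le_of_mem_vars (hw : ∀ i, 0 ≤ w i) (hφ : φ.IsWeightedHomogeneous w m) {i : σ}
    (hi : i ∈ φ.vars) : w i ≤ m := by
  classical
  obtain ⟨d, hd, hid⟩ := (mem_vars_iff_mem_support i).mp hi
  rw [← hφ (mem_support_iff.mp hd)]
  exact Finsupp.le_weight_of_ne_zero hw (Finsupp.mem_support_iff.mp hid)

theorem eq_zero_of_neg (hw : ∀ i, 0 ≤ w i) (hφ : φ.IsWeightedHomogeneous w m) (hm : m < 0) :
    φ = 0 :=
  hφ.eq_zero_of_no_monomials fun d hd => by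
    have : 0 ≤ Finsupp.weight w d := Finset.sum_nonneg fun i _ => nsmul_nonneg (hw i) (d i)
    exact (hm.trans_le (hd ▸ this)).false

end IsWeightedHomogeneous

end MvPolynomial

theorem Matrix.isWeightedHomogeneous_pow_apply {ι σ R M : Type*} [Fintype ι] [DecidableEq ι]
    [CommSemiring R] [AddCommGroup M] {w : σ → M} {ℓ : ι → M} {e : M}
    {A : Matrix ι ι (MvPolynomial σ R)}
    (hA : ∀ J K, (A J K).IsWeightedHomogeneous w (ℓ J - ℓ K + e)) (k : ℕ) (J K : ι) :
    ((A ^ k) J K).IsWeightedHomogeneous w (ℓ J - ℓ K + k • e) := by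
  induction k generalizing K with
  | zero =>
    rw [pow_zero, Matrix.one_apply]
    split_ifs with h
    · simpa [h] using MvPolynomial.isWeightedHomogeneous_one R w
    · exact MvPolynomial.isWeightedHomogeneous_zero _ _ _
  | succ k ih =>
    rw [pow_succ, Matrix.mul_apply]
    refine MvPolynomial.IsWeightedHomogeneous.sum _ _ _ fun L _ => ?_
    convert (ih L).mul (hA L K) using 1
    rw [succ_nsmul]
    abel

section FockOperators

open Matrix

variable {n : ℕ}

lemma creMat_mulVec_single (p : Fin n) (J : Finset (Fin n)) (c : ℂ) :
    creMat n p *ᵥ Pi.single J c =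
      if p ∈ J then 0 else Pi.single (insert p J) ((-1) ^ #(J.filter (· < p)) * c) := by
  ext K
  simp only [mulVec_single, Pi.smul_apply, col_apply, op_smul_eq_smul, smul_eq_mul, creMat]
  by_cases hp : p ∈ J <;> simp [hp, Pi.single_apply, mul_comm]

lemma annMat_mulVec_single (p : Fin n) (J : Finset (Fin n)) (c : ℂ) :
    annMat n p *ᵥ Pi.single J c =
      if p ∈ J then Pi.single (J.erase p) ((-1) ^ #(J.filter (· < p)) * c) else 0 := by
  ext K
  simp only [mulVec_single, Pi.smul_apply, col_apply, op_smul_eq_smul, smul_eq_mul, annMat]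
  by_cases hp : p ∈ J <;> simp [hp, Pi.single_apply, mul_comm]

lemma exists_creMat_prod_mulVec_single {l : List (Fin n)} (hl : l.Nodup) (S : Finset (Fin n))
    (c : ℂ) :
    ∃ ε, (l.map (creMat n)).prod *ᵥ Pi.single S c = Pi.single (S ∪ l.toFinset) ε ∧
      (ε ≠ 0 ↔ c ≠ 0 ∧ Disjoint S l.toFinset) := by
  induction l with
  | nil => exact ⟨c, by simp only [List.map_nil, List.prod_nil, one_mulVec]; simp⟩
  | cons a l ih =>
    obtain ⟨ha, hl⟩ := List.nodup_cons.mp hl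
    obtain ⟨ε, hε, hε0⟩ := ih hl
    rw [List.map_cons, List.prod_cons, ← mulVec_mulVec, hε, creMat_mulVec_single,
      List.toFinset_cons, union_insert, disjoint_insert_right]
    by_cases haS : a ∈ S ∪ l.toFinset
    · have : a ∈ S := by simpa [ha] using haS
      exact ⟨0, by simp [haS, this]⟩
    · refine ⟨_, if_neg haS, ?_⟩
      have : a ∉ S := fun h => haS (mem_union_left _ h)
      simp [hε0, this]

lemma exists_annMat_prod_mulVec_single {l : List (Fin n)} (hl : l.Nodup) (S : Finset (Fin n))
    (c : ℂ) :
    ∃ ε, (l.map (annMat n)).prod *ᵥ Pi.single S c = Pi.single (S \ l.toFinset) ε ∧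
      (ε ≠ 0 ↔ c ≠ 0 ∧ l.toFinset ⊆ S) := by
  induction l with
  | nil => exact ⟨c, by simp only [List.map_nil, List.prod_nil, one_mulVec]; simp⟩
  | cons a l ih =>
    obtain ⟨ha, hl⟩ := List.nodup_cons.mp hl
    obtain ⟨ε, hε, hε0⟩ := ih hl
    rw [List.map_cons, List.prod_cons, ← mulVec_mulVec, hε, annMat_mulVec_single,
      List.toFinset_cons, sdiff_insert, insert_subset_iff]
    by_cases haS : a ∈ S \ l.toFinset
    · refine ⟨_, if_pos haS, ?_⟩
      simp [hε0, (mem_sdiff.mp haS).1]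
    · have : a ∉ S := by simpa [ha] using haS
      exact ⟨0, by simp [haS, this]⟩

lemma exists_exMon_apply (I B K S : Finset (Fin n)) :
    ∃ ε, exMon n I B K S = (if K = (S \ I) ∪ B then ε else 0) ∧
      (ε ≠ 0 ↔ I ⊆ S ∧ Disjoint (S \ I) B) := by
  obtain ⟨ε₁, h₁, hε₁⟩ :=
    exists_annMat_prod_mulVec_single (I.sort_nodup (· ≤ ·)) S 1
  obtain ⟨ε₂, h₂, hε₂⟩ := exists_creMat_prod_mulVec_single
    (List.nodup_reverse.mpr (B.sort_nodup (· ≤ ·))) (S \ I) ε₁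
  simp only [sort_toFinset, List.toFinset_reverse] at h₁ hε₁ h₂ hε₂
  refine ⟨ε₂, ?_, by simp [hε₂, hε₁]⟩
  rw [← Pi.single_apply, ← h₂, ← h₁, mulVec_mulVec, ← exMon, mulVec_single_one,
    col_apply]

lemma exMon_apply_ne_zero {I B K S : Finset (Fin n)} (h : exMon n I B K S ≠ 0) :
    I ⊆ S ∧ Disjoint (S \ I) B ∧ K = (S \ I) ∪ B := by
  obtain ⟨ε, hε, hε0⟩ := exists_exMon_apply I B K S
  rw [hε] at h
  split_ifs at h with hK
  · exact ⟨(hε0.mp h).1, (hε0.mp h).2, hK⟩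
  · exact absurd rfl h

end FockOperators

namespace CoupledCluster

open MvPolynomial

abbrev AmplitudeIndex (n d : ℕ) :=
  {p : Finset (Fin n) × Finset (Fin n) //
    p.1 ⊆ refSet n d ∧ p.2 ⊆ (refSet n d)ᶜ ∧ p ≠ (∅, ∅)}

def level (n d : ℕ) (J : Finset (Fin n)) : ℕ := #(refSet n d \ J) + #(J \ refSet n d)

variable {n d : ℕ}

@[simp]
lemma level_refSet : level n d (refSet n d) = 0 := by simp [level]

namespace AmplitudeIndex

def rank (q : AmplitudeIndex n d) : ℕ := #q.1.1 + #q.1.2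

def target (q : AmplitudeIndex n d) : Finset (Fin n) := (refSet n d \ q.1.1) ∪ q.1.2

variable (q : AmplitudeIndex n d)

lemma one_le_rank : 1 ≤ q.rank := by
  rw [rank, Nat.one_le_iff_ne_zero]
  intro h
  simp only [Nat.add_eq_zero_iff, card_eq_zero] at h
  exact q.2.2.2 (Prod.ext h.1 h.2)

lemma refSet_sdiff_target : refSet n d \ q.target = q.1.1 := by
  obtain ⟨⟨I, B⟩, hI, hB, -⟩ := q
  ext x
  have := @hI x
  have := @hB x
  simp only [target, mem_sdiff, mem_union, mem_compl] at *
  tauto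

lemma target_sdiff_refSet : q.target \ refSet n d = q.1.2 := by
  obtain ⟨⟨I, B⟩, hI, hB, -⟩ := q
  ext x
  have := @hI x
  have := @hB x
  simp only [target, mem_sdiff, mem_union, mem_compl] at *
  tauto

lemma level_target : level n d q.target = q.rank := by
  rw [level, refSet_sdiff_target, target_sdiff_refSet, rank]

lemma target_ne_refSet : q.target ≠ refSet n d := fun h => by
  have := q.level_target
  rw [h, level_refSet] at this
  exact absurd this.symm (ne_of_gt q.one_le_rank)

lemma target_injective : Function.Injective (target (n := n) (d := d)) := fun p q h =>
  Subtype.ext (Prod.ext (by rw [← refSet_sdiff_target, h, refSet_sdiff_target])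
    (by rw [← target_sdiff_refSet, h, target_sdiff_refSet]))

lemma exists_target_eq {J : Finset (Fin n)} (hJ : J ≠ refSet n d) :
    ∃ q : AmplitudeIndex n d, q.target = J := by
  refine ⟨⟨(refSet n d \ J, J \ refSet n d), sdiff_subset, ?_, ?_⟩, ?_⟩
  · intro x hx
    simpa using (mem_sdiff.mp hx).2
  · intro h
    simp only [Prod.mk.injEq, sdiff_eq_empty_iff_subset] at h
    exact hJ (h.2.antisymm h.1)
  · ext x
    simp only [target, mem_sdiff, mem_union]
    tauto

lemma level_eq_of_exMon_ne_zero {K S : Finset (Fin n)} (h : exMon n q.1.1 q.1.2 K S ≠ 0) :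
    level n d K = level n d S + q.rank := by
  obtain ⟨hIS, hdisj, rfl⟩ := exMon_apply_ne_zero h
  obtain ⟨hI, hB, -⟩ := q.2
  have h₁ : refSet n d \ ((S \ q.1.1) ∪ q.1.2) = (refSet n d \ S) ∪ q.1.1 := by
    ext x
    have := @hI x; have := @hB x; have := @hIS x
    have : x ∈ S \ q.1.1 → x ∉ q.1.2 := fun h => disjoint_left.mp hdisj h
    simp only [mem_sdiff, mem_union, mem_compl] at *
    tauto
  have h₂ : ((S \ q.1.1) ∪ q.1.2) \ refSet n d = (S \ refSet n d) ∪ q.1.2 := by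
    ext x
    have := @hI x; have := @hB x
    simp only [mem_sdiff, mem_union, mem_compl] at *
    tauto
  rw [level, level, rank, h₁, h₂, card_union_of_disjoint, card_union_of_disjoint]
  · ring
  · exact disjoint_left.mpr fun x hxS => disjoint_left.mp hdisj
      (mem_sdiff.mpr ⟨(mem_sdiff.mp hxS).1, fun hxI => (mem_sdiff.mp hxS).2 (hI hxI)⟩)
  · exact disjoint_left.mpr fun x hxS hxI => (mem_sdiff.mp hxS).2 (hIS hxI)

lemma exMon_apply_refSet_ne_zero_iff (K : Finset (Fin n)) :
    exMon n q.1.1 q.1.2 K (refSet n d) ≠ 0 ↔ K = q.target := by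
  obtain ⟨ε, hε, hε0⟩ := exists_exMon_apply q.1.1 q.1.2 K (refSet n d)
  have : ε ≠ 0 := hε0.mpr ⟨q.2.1, disjoint_left.mpr fun x hx hxB =>
    by simpa [(mem_sdiff.mp hx).1] using q.2.2.1 hxB⟩
  rw [hε, target]
  split_ifs with hK <;> simp [hK, this]

noncomputable def leadingCoeff : ℂ := exMon n q.1.1 q.1.2 q.target (refSet n d)

lemma leadingCoeff_ne_zero : q.leadingCoeff ≠ 0 :=
  (q.exMon_apply_refSet_ne_zero_iff _).mpr rfl

end AmplitudeIndex

open AmplitudeIndex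

noncomputable def genericCluster (n d : ℕ) :
    Matrix (Finset (Fin n)) (Finset (Fin n)) (MvPolynomial (AmplitudeIndex n d) ℂ) :=
  Matrix.of fun J K => ∑ q, exMon n q.1.1 q.1.2 J K • X q

noncomputable def genericPsi (n d : ℕ) (J : Finset (Fin n)) :
    MvPolynomial (AmplitudeIndex n d) ℂ :=
  (∑ k ∈ range (n + 1), ((k.factorial : ℂ))⁻¹ • genericCluster n d ^ k) J (refSet n d)

lemma mapMatrix_aeval_genericCluster (t : Finset (Fin n) × Finset (Fin n) → ℂ) :
    (aeval fun q : AmplitudeIndex n d => t q.1).mapMatrix (genericCluster n d) =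
      clusterMat n d t := by
  ext J K
  rw [clusterMat, ← sum_subtype_eq_sum_filter, subtype_univ]
  simp only [AlgHom.mapMatrix_apply, Matrix.map_apply, genericCluster, Matrix.of_apply, map_sum,
    map_smul, aeval_X, smul_eq_mul, Matrix.sum_apply, Matrix.smul_apply]
  exact sum_congr rfl fun q _ => mul_comm _ _

lemma eval_genericPsi (t : Finset (Fin n) × Finset (Fin n) → ℂ) (J : Finset (Fin n)) :
    eval (fun q : AmplitudeIndex n d => t q.1) (genericPsi n d J) = ccPsi n d t J := by
  rw [← aeval_eq_eval]
  change ((aeval _).mapMatrix (∑ k ∈ range (n + 1), _)) J (refSet n d) = _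
  simp only [map_sum, map_smul, map_pow, mapMatrix_aeval_genericCluster]
  rfl

lemma isWeightedHomogeneous_genericCluster_pow_apply (k : ℕ) (J K : Finset (Fin n)) :
    ((genericCluster n d ^ k) J K).IsWeightedHomogeneous (fun q => (q.rank : ℤ) - 1)
      (level n d J - level n d K - k) := by
  have h := Matrix.isWeightedHomogeneous_pow_apply (w := fun q => (q.rank : ℤ) - 1) (e := -1)
    (ℓ := fun J => (level n d J : ℤ)) (A := genericCluster n d) ?_ k J K
  · simpa [sub_eq_add_neg] using h
  intro J K
  refine IsWeightedHomogeneous.sum _ _ _ fun q _ => ?_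
  by_cases hq : exMon n q.1.1 q.1.2 J K = 0
  · rw [hq, zero_smul]
    exact isWeightedHomogeneous_zero _ _ _
  · rw [smul_eq_C_mul]
    convert (isWeightedHomogeneous_X ℂ _ q).C_mul (exMon n q.1.1 q.1.2 J K) using 1
    rw [q.level_eq_of_exMon_ne_zero hq]
    push_cast
    ring

lemma genericCluster_pow_apply_refSet {k : ℕ} (hk : k ≠ 0) :
    (genericCluster n d ^ k) (refSet n d) (refSet n d) = 0 :=
  (isWeightedHomogeneous_genericCluster_pow_apply k _ _).eq_zero_of_neg
    (fun q => by have := q.one_le_rank; omega) (by simp only [level_refSet]; omega)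

lemma genericPsi_refSet : genericPsi n d (refSet n d) = 1 := by
  rw [genericPsi, Matrix.sum_apply, sum_eq_single 0]
  · simp
  · intro k _ hk
    rw [Matrix.smul_apply, genericCluster_pow_apply_refSet hk, smul_zero]
  · simp

lemma genericCluster_apply_target_refSet (q : AmplitudeIndex n d) :
    genericCluster n d q.target (refSet n d) = C q.leadingCoeff * X q := by
  rw [genericCluster, Matrix.of_apply, sum_eq_single q, smul_eq_C_mul, leadingCoeff]
  · intro p _ hpq
    suffices exMon n p.1.1 p.1.2 q.target (refSet n d) = 0 by rw [this, zero_smul]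
    by_contra h
    exact hpq (target_injective ((p.exMon_apply_refSet_ne_zero_iff _).mp h).symm)
  · simp

lemma rank_lt_of_mem_vars_genericCluster_pow_apply (q : AmplitudeIndex n d) {k : ℕ}
    (hk : 2 ≤ k) {p : AmplitudeIndex n d}
    (hp : p ∈ ((genericCluster n d ^ k) q.target (refSet n d)).vars) : p.rank < q.rank := by
  have := (isWeightedHomogeneous_genericCluster_pow_apply k _ _).weight_le_of_mem_vars
    (fun q => by have := q.one_le_rank; omega) hp
  rw [level_target, level_refSet] at this
  omega

lemma isTriangular_genericPsi :
    IsTriangular rank leadingCoeff fun q : AmplitudeIndex n d => genericPsi n d q.target := by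
  classical
  refine ⟨leadingCoeff_ne_zero, fun q p hp => ?_⟩
  have h1 : 1 ∈ range (n + 1) := by
    rcases n with _ | n
    · exact absurd (Subsingleton.elim _ _) q.2.2.2
    · simp
  beta_reduce at hp
  rw [genericPsi, Matrix.sum_apply, ← add_sum_erase _ _ h1, Matrix.smul_apply, pow_one,
    genericCluster_apply_target_refSet, Nat.factorial_one, Nat.cast_one, inv_one, one_smul,
    add_sub_cancel_left] at hp
  obtain ⟨k, hk, hp⟩ := mem_biUnion.mp (vars_sum_subset _ _ hp)
  rw [Matrix.smul_apply, smul_eq_C_mul,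
    vars_C_mul _ (inv_ne_zero (Nat.cast_ne_zero.mpr k.factorial_ne_zero))] at hp
  rcases Nat.lt_or_ge k 2 with hk2 | hk2
  · obtain rfl : k = 0 := by have := ne_of_mem_erase hk; omega
    simp [Matrix.one_apply_ne q.target_ne_refSet] at hp
  · exact rank_lt_of_mem_vars_genericCluster_pow_apply q hk2 hp

noncomputable def amplitudePoly (n d : ℕ) (q : AmplitudeIndex n d) :
    MvPolynomial (Finset (Fin n)) ℂ :=
  rename target (triangularInverse rank leadingCoeff (fun p => genericPsi n d p.target) q)

lemma eval_amplitudePoly (t : Finset (Fin n) × Finset (Fin n) → ℂ) (q : AmplitudeIndex n d) :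
    eval (ccPsi n d t) (amplitudePoly n d q) = t q.1 := by
  rw [amplitudePoly, eval_rename,
    ← isTriangular_genericPsi.eval_triangularInverse_eval (fun p => t p.1) q]
  simp only [Function.comp_def, eval_genericPsi]

lemma level_le_of_mem_vars_amplitudePoly (q : AmplitudeIndex n d) :
    ∀ J ∈ (amplitudePoly n d q).vars, level n d J ≤ q.rank := by
  classical
  intro J hJ
  obtain ⟨p, hp, rfl⟩ := mem_image.mp (vars_rename _ _ hJ)
  exact (level_target p).trans_le (isTriangular_genericPsi.vars_triangularInverse q p hp)

noncomputable def inverseAmplitudes (n d : ℕ) (ψ : Finset (Fin n) → ℂ) :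
    Finset (Fin n) × Finset (Fin n) → ℂ :=
  fun p => if h : _ then eval ψ (amplitudePoly n d ⟨p, h⟩) else 0

lemma inverseAmplitudes_coe (ψ : Finset (Fin n) → ℂ) (q : AmplitudeIndex n d) :
    inverseAmplitudes n d ψ q.1 = eval ψ (amplitudePoly n d q) :=
  dif_pos q.2

lemma ccPsi_inverseAmplitudes {ψ : Finset (Fin n) → ℂ} (hψ : ψ (refSet n d) = 1) :
    ccPsi n d (inverseAmplitudes n d ψ) = ψ := by
  funext J
  rw [← eval_genericPsi]
  by_cases hJ : J = refSet n d
  · rw [hJ, genericPsi_refSet, map_one, hψ]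
  · obtain ⟨q, rfl⟩ := exists_target_eq hJ
    simp only [inverseAmplitudes_coe, amplitudePoly, eval_rename]
    exact isTriangular_genericPsi.eval_eval_triangularInverse (ψ ∘ target) q

end CoupledCluster

open CoupledCluster in
theorem stmt_12_general (n d : ℕ) :
    Function.Injective (fun t : Amplitudes n d => ccPsi n d t.1)
    ∧ Set.range (fun t : Amplitudes n d => ccPsi n d t.1) =
        {ψ : Finset (Fin n) → ℂ | ψ (refSet n d) = 1}
    ∧ ∃ P : Finset (Fin n) × Finset (Fin n) → MvPolynomial (Finset (Fin n)) ℂ,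
        ∀ (t : Amplitudes n d) (p : Finset (Fin n) × Finset (Fin n)),
          (p.1 ⊆ refSet n d ∧ p.2 ⊆ (refSet n d)ᶜ ∧ p ≠ (∅, ∅)) →
            t.1 p = MvPolynomial.eval (ccPsi n d t.1) (P p)
            ∧ ∀ J ∈ (P p).vars,
                (refSet n d \ J).card + (J \ refSet n d).card ≤ p.1.card + p.2.card := by
  refine ⟨fun t t' h => Subtype.ext (funext fun p => ?_), ?_, ?_⟩
  · by_cases hp : p.1 ⊆ refSet n d ∧ p.2 ⊆ (refSet n d)ᶜ ∧ p ≠ (∅, ∅)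
    · rw [← eval_amplitudePoly t.1 ⟨p, hp⟩, ← eval_amplitudePoly t'.1 ⟨p, hp⟩]
      exact congrArg (MvPolynomial.eval · _) h
    · rw [t.2 p hp, t'.2 p hp]
  · refine Set.Subset.antisymm (Set.range_subset_iff.mpr fun t => ?_) fun ψ hψ => ?_
    · rw [Set.mem_ofPred_eq, ← eval_genericPsi, genericPsi_refSet, map_one]
    · exact ⟨⟨inverseAmplitudes n d ψ, fun p hp => dif_neg hp⟩,
        ccPsi_inverseAmplitudes hψ⟩
  · refine ⟨fun p => if h : _ then amplitudePoly n d ⟨p, h⟩ else 0, fun t p hp => ?_⟩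
    simp only [dif_pos hp]
    exact ⟨(eval_amplitudePoly t.1 ⟨p, hp⟩).symm,
      level_le_of_mem_vars_amplitudePoly ⟨p, hp⟩⟩

/-- The exponential parametrization is a bijection from cluster amplitudes onto the
affine chart `{ψ_{[d]} = 1}`, and each inverse coordinate `t_{I,B}` is a polynomial
in the `ψ`-coordinates of level at most the level of `(I,B)`. -/
theorem stmt_12 (n d : ℕ) (hdn : d ≤ n) :
    Function.Injective (fun t : Amplitudes n d => ccPsi n d t.1)
    ∧ Set.range (fun t : Amplitudes n d => ccPsi n d t.1) =
        {ψ : Finset (Fin n) → ℂ | ψ (refSet n d) = 1}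
    ∧ ∃ P : Finset (Fin n) × Finset (Fin n) → MvPolynomial (Finset (Fin n)) ℂ,
        ∀ (t : Amplitudes n d) (p : Finset (Fin n) × Finset (Fin n)),
          (p.1 ⊆ refSet n d ∧ p.2 ⊆ (refSet n d)ᶜ ∧ p ≠ (∅, ∅)) →
            t.1 p = MvPolynomial.eval (ccPsi n d t.1) (P p)
            ∧ ∀ J ∈ (P p).vars,
                (refSet n d \ J).card + (J \ refSet n d).card ≤ p.1.card + p.2.card :=
  stmt_12_general n d
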